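/- arXiv:1202.5233 — 2 statements merged into one kernel-verified Lean document; each statement's English description precedes it below -/
import Mathlib

section
/- Appending one character to a word changes its Lempel-Ziv factorization in exactly one of two ways: if X has LZ factorization f_1,...,f_i then Xa has LZ factorization either f_1,...,f_{i-1},(f_i·a) or f_1,...,f_i,f_{i+1} where f_{i+1} = a. -/
/-- `X` occurs in `W` starting at 0-based position `p` (1-based position `p+1`). -/
def OccursAt {α : Type*} (X W : List α) (p : ℕ) : Prop :=
  (W.drop p).take X.length = X

/-- `X` occurs in `W` starting at some 1-based position `≤ ℓ`,
    i.e. at a 0-based position `< ℓ`. -/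
def OccursBefore {α : Type*} (X W : List α) (ℓ : ℕ) : Prop :=
  ∃ p < ℓ, OccursAt X W p

/-- `fs` is the Lempel-Ziv factorization of `W`. -/
def IsLZFact {α : Type*} (W : List α) (fs : List (List α)) : Prop :=
  fs.flatten = W ∧ (∀ f ∈ fs, f ≠ []) ∧
  ∀ i : Fin fs.length,
    ((fs.get i).length = 1 ∧
        ¬ OccursBefore (fs.get i) W ((fs.take i).flatten).length) ∨
    (OccursBefore (fs.get i) W ((fs.take i).flatten).length ∧
      ∀ s ≤ W.length - ((fs.take i).flatten).length,
        OccursBefore ((W.drop ((fs.take i).flatten).length).take s) W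
            ((fs.take i).flatten).length →
        s ≤ (fs.get i).length)

/-! Write `fs = gs ++ [f]`, so that `X = P ++ f` with `P = gs.flatten`. The factors of `gs` end
before the last letter of `X`, so their conditions survive appending `a`: a previous occurrence
long enough to contradict maximality would already lie inside `X`. Everything therefore hinges
on whether `f ++ [a]` occurs before position `|P|`. If it does, `f` is no longer maximal, while
`f ++ [a]`, reaching the end of the word, is; if it does not, `f` stays maximal and `[a]` is a
valid factor (a new letter, or the whole rest of the word). -/

section

variable {α : Type*}

theorem OccursAt.of_prefix {Y Z W : List α} {p : ℕ} (hYZ : Y <+: Z) (h : OccursAt Z W p) :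
    OccursAt Y W p := by
  unfold OccursAt at *
  rw [← min_eq_left hYZ.length_le, ← List.take_take, h]
  exact (List.prefix_iff_eq_take.mp hYZ).symm

theorem OccursBefore.of_prefix {Y Z W : List α} {ℓ : ℕ} (hYZ : Y <+: Z)
    (h : OccursBefore Z W ℓ) : OccursBefore Y W ℓ :=
  let ⟨p, hp, hocc⟩ := h
  ⟨p, hp, hocc.of_prefix hYZ⟩

theorem occursAt_append_iff {Y W V : List α} {p : ℕ} (hp : p + Y.length ≤ W.length) :
    OccursAt Y (W ++ V) p ↔ OccursAt Y W p := by
  unfold OccursAt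
  rw [List.drop_append_of_le_length (by omega),
    List.take_append_of_le_length (by rw [List.length_drop]; omega)]

theorem occursBefore_append_iff {Y W V : List α} {ℓ : ℕ} (hℓ : ℓ + Y.length ≤ W.length) :
    OccursBefore Y (W ++ V) ℓ ↔ OccursBefore Y W ℓ :=
  exists_congr fun _ => and_congr_right fun hp => occursAt_append_iff (by omega)

def IsLZFactorAt (W : List α) (ℓ : ℕ) (f : List α) : Prop :=
  (f.length = 1 ∧ ¬ OccursBefore f W ℓ) ∨
  (OccursBefore f W ℓ ∧ ∀ s ≤ W.length - ℓ, OccursBefore ((W.drop ℓ).take s) W ℓ → s ≤ f.length)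

/-- A longer previous occurrence in `W ++ V` would already give one of length `f.length + 1`
inside `W`. -/
theorem IsLZFactorAt.append {W V f : List α} {ℓ : ℕ} (hℓ : ℓ + f.length < W.length)
    (h : IsLZFactorAt W ℓ f) : IsLZFactorAt (W ++ V) ℓ f := by
  rcases h with ⟨hlen, hnew⟩ | ⟨hocc, hmax⟩
  · exact Or.inl ⟨hlen, fun hc => hnew ((occursBefore_append_iff hℓ.le).mp hc)⟩
  refine Or.inr ⟨(occursBefore_append_iff hℓ.le).mpr hocc, fun s hs hs_occ => ?_⟩
  by_contra! hgt
  have hext : (W.drop ℓ).take (f.length + 1) <+: ((W ++ V).drop ℓ).take s := by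
    rw [List.drop_append_of_le_length (by omega)]
    exact (List.take_prefix_take_left (by omega)).trans
      (List.prefix_append _ _ |>.take s)
  have hext_len : ((W.drop ℓ).take (f.length + 1)).length = f.length + 1 := by
    simp only [List.length_take, List.length_drop]
    omega
  have := hmax (f.length + 1) (by omega)
    ((occursBefore_append_iff (by omega)).mp (hs_occ.of_prefix hext))
  omega

theorem isLZFactorAt_append_singleton (X : List α) (a : α) :
    IsLZFactorAt (X ++ [a]) X.length [a] := by
  by_cases hocc : OccursBefore [a] (X ++ [a]) X.length
  · exact Or.inr ⟨hocc, fun s hs _ => by simpa using hs⟩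
  · exact Or.inl ⟨rfl, hocc⟩

theorem isLZFactorAt_extend_last_iff {P f : List α} (a : α) (hf : f ≠ []) :
    IsLZFactorAt (P ++ f ++ [a]) P.length (f ++ [a]) ↔
      OccursBefore (f ++ [a]) (P ++ f ++ [a]) P.length := by
  refine ⟨fun h => ?_, fun h => Or.inr ⟨h, fun s hs _ => by simpa using hs⟩⟩
  rcases h with ⟨hlen, -⟩ | ⟨hocc, -⟩
  · exact absurd (by simpa using hlen) hf
  · exact hocc

/-- The only candidate longer than `f` at that position is `f ++ [a]`. -/
theorem isLZFactorAt_keep_last_iff {P f : List α} (a : α) (h : IsLZFactorAt (P ++ f) P.length f) :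
    IsLZFactorAt (P ++ f ++ [a]) P.length f ↔
      ¬ OccursBefore (f ++ [a]) (P ++ f ++ [a]) P.length := by
  have hrest : (P ++ f ++ [a]).drop P.length = f ++ [a] := by simp
  have htransfer := occursBefore_append_iff (Y := f) (V := [a]) (ℓ := P.length)
    (W := P ++ f) (by simp)
  constructor
  · rintro (⟨-, hnew⟩ | ⟨-, hmax⟩) hext
    · exact hnew (hext.of_prefix (List.prefix_append f [a]))
    · have := hmax (f.length + 1) (by simp) (by rwa [hrest, List.take_of_length_le (by simp)])
      omega
  · intro hext
    rcases h with ⟨hlen, hnew⟩ | ⟨hocc, -⟩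
    · exact Or.inl ⟨hlen, fun hc => hnew (htransfer.mp hc)⟩
    refine Or.inr ⟨htransfer.mpr hocc, fun s hs hs_occ => ?_⟩
    simp only [List.length_append, List.length_singleton] at hs
    by_contra! hgt
    rw [hrest, show s = f.length + 1 by omega, List.take_of_length_le (by simp)] at hs_occ
    exact hext hs_occ

def IsLZFactorsFrom (W : List α) : ℕ → List (List α) → Prop
  | _, [] => True
  | ℓ, f :: fs => IsLZFactorAt W ℓ f ∧ IsLZFactorsFrom W (ℓ + f.length) fs

theorem forall_isLZFactorAt_iff_isLZFactorsFrom (W : List α) (ℓ : ℕ) (fs : List (List α)) :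
    (∀ i : Fin fs.length,
        IsLZFactorAt W (ℓ + (fs.take i).flatten.length) (fs.get i)) ↔
      IsLZFactorsFrom W ℓ fs := by
  induction fs generalizing ℓ with
  | nil => simp [IsLZFactorsFrom]
  | cons f fs ih =>
    simp [IsLZFactorsFrom, Fin.forall_fin_succ, ← ih, add_assoc]

theorem isLZFact_iff (W : List α) (fs : List (List α)) :
    IsLZFact W fs ↔ fs.flatten = W ∧ (∀ f ∈ fs, f ≠ []) ∧ IsLZFactorsFrom W 0 fs := by
  simp only [IsLZFact, ← forall_isLZFactorAt_iff_isLZFactorsFrom, zero_add]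
  rfl

theorem isLZFactorsFrom_append {W : List α} {ℓ : ℕ} {fs gs : List (List α)} :
    IsLZFactorsFrom W ℓ (fs ++ gs) ↔
      IsLZFactorsFrom W ℓ fs ∧ IsLZFactorsFrom W (ℓ + fs.flatten.length) gs := by
  induction fs generalizing ℓ with
  | nil => simp [IsLZFactorsFrom]
  | cons f fs ih => simp [IsLZFactorsFrom, ih, and_assoc, add_assoc]

theorem isLZFact_append_iff {W : List α} {fs gs : List (List α)} (hflat : (fs ++ gs).flatten = W)
    (hne : ∀ g ∈ fs ++ gs, g ≠ []) (hfs : IsLZFactorsFrom W 0 fs) :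
    IsLZFact W (fs ++ gs) ↔ IsLZFactorsFrom W fs.flatten.length gs := by
  rw [isLZFact_iff, isLZFactorsFrom_append, zero_add]
  exact ⟨fun h => h.2.2.2, fun h => ⟨hflat, hne, hfs, h⟩⟩

theorem IsLZFactorsFrom.append {W V : List α} {ℓ : ℕ} {fs : List (List α)}
    (hℓ : ℓ + fs.flatten.length < W.length) (h : IsLZFactorsFrom W ℓ fs) :
    IsLZFactorsFrom (W ++ V) ℓ fs := by
  induction fs generalizing ℓ with
  | nil => trivial
  | cons f fs ih =>
    simp only [List.flatten_cons, List.length_append] at hℓ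
    exact ⟨h.1.append (by omega), ih (by omega) h.2⟩

section LastFactor

variable {gs : List (List α)} {f : List α}

theorem IsLZFact.isLZFactorsFrom_dropLast (h : IsLZFact (gs.flatten ++ f) (gs ++ [f]))
    (V : List α) : IsLZFactorsFrom (gs.flatten ++ f ++ V) 0 gs := by
  obtain ⟨-, hne, hfac⟩ := (isLZFact_iff _ _).1 h
  have hf : f ≠ [] := hne f (by simp)
  refine (isLZFactorsFrom_append.1 hfac).1.append ?_
  simp [List.length_pos_iff.mpr hf]

theorem IsLZFact.isLZFactorAt_getLast (h : IsLZFact (gs.flatten ++ f) (gs ++ [f])) :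
    IsLZFactorAt (gs.flatten ++ f) gs.flatten.length f := by
  simpa [IsLZFactorsFrom] using (isLZFactorsFrom_append.1 ((isLZFact_iff _ _).1 h).2.2).2

theorem IsLZFact.extend_last_iff (h : IsLZFact (gs.flatten ++ f) (gs ++ [f])) (a : α) :
    IsLZFact (gs.flatten ++ f ++ [a]) (gs ++ [f ++ [a]]) ↔
      OccursBefore (f ++ [a]) (gs.flatten ++ f ++ [a]) gs.flatten.length := by
  have hne := ((isLZFact_iff _ _).1 h).2.1
  rw [isLZFact_append_iff (by simp) ?_ (h.isLZFactorsFrom_dropLast [a]), IsLZFactorsFrom,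
    IsLZFactorsFrom, and_true, isLZFactorAt_extend_last_iff a (hne f (by simp))]
  exact List.forall_mem_append.2 ⟨fun g hg => hne g (List.mem_append_left _ hg), by simp⟩

theorem IsLZFact.new_factor_iff (h : IsLZFact (gs.flatten ++ f) (gs ++ [f])) (a : α) :
    IsLZFact (gs.flatten ++ f ++ [a]) (gs ++ [f] ++ [[a]]) ↔
      ¬ OccursBefore (f ++ [a]) (gs.flatten ++ f ++ [a]) gs.flatten.length := by
  have hne := ((isLZFact_iff _ _).1 h).2.1
  rw [List.append_assoc gs, isLZFact_append_iff (by simp) ?_ (h.isLZFactorsFrom_dropLast [a])]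
  · simp only [List.singleton_append, IsLZFactorsFrom, and_true]
    rw [isLZFactorAt_keep_last_iff a h.isLZFactorAt_getLast, ← List.length_append]
    exact and_iff_left (isLZFactorAt_append_singleton _ a)
  · exact List.forall_mem_append.2
      ⟨fun g hg => hne g (List.mem_append_left _ hg), by simpa using hne f (by simp)⟩

end LastFactor

end

/-- Appending one character changes the LZ factorization in exactly one of two
    ways: either the last factor absorbs the new character, or the new
    character becomes a new one-character factor. -/
theorem lz_append_char {α : Type*} (X : List α) (a : α) (fs : List (List α))
    (h : IsLZFact X fs) :
    Xor'
      (∃ hne : fs ≠ [],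
        IsLZFact (X ++ [a]) (fs.dropLast ++ [fs.getLast hne ++ [a]]))
      (IsLZFact (X ++ [a]) (fs ++ [[a]])) := by
  rcases fs.eq_nil_or_concat' with rfl | ⟨gs, f, rfl⟩
  · obtain rfl : X = [] := by simpa using h.1.symm
    refine Or.inr ⟨(isLZFact_iff _ _).2 ⟨by simp, by simp, ?_⟩, fun ⟨hnil, _⟩ => hnil rfl⟩
    simpa [IsLZFactorsFrom] using isLZFactorAt_append_singleton [] a
  obtain rfl : X = gs.flatten ++ f := by simpa using h.1.symm
  simp only [List.dropLast_concat, List.getLast_append_singleton,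
    exists_prop_of_true (List.concat_ne_nil f gs), h.extend_last_iff, h.new_factor_iff]
  exact xor_not_right.mpr Iff.rfl
end

section
/- Let W' be the meta-word of W (blocks of r characters) and suppose W'[ℓ'+1..s-1] occurs in W' starting at some position ≤ ℓ', where ℓ' = ⌊ℓ/r⌋ and ℓ is the total length of the LZ factors f_1,...,f_{i-1} of W. Then W[ℓ+1..(s-1)r] occurs in W starting at a position ≤ ℓ, and hence |f_i| ≥ (s-1)r - ℓ. -/
/-- The meta-word of `W` with block size `r`: the word over the alphabet of
    `r`-tuples whose `j`-th character is the `j`-th block of `r` characters of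
    `W`. -/
def metaWord {α : Type*} (r : ℕ) (W : List α) : List (List α) :=
  (List.range (W.length / r)).map fun j => (W.drop (j * r)).take r

/-!
Since `W'` is `W` cut into blocks of length `r`, an occurrence of `W'[ℓ'+1..s-1]` at
block `q` flattens to an occurrence of `W[ℓ'r+1..(s-1)r]` at position `qr + 1`.
Dropping the first `ℓ - ℓ'r < r` characters of both copies gives an occurrence of
`W[ℓ+1..(s-1)r]` at `qr + 1 + (ℓ - ℓ'r) ≤ ℓ`, and the greedy choice of `f_i` makes it
at least that long.
-/

namespace OccursAt

variable {α : Type*} {X W : List α} {p : ℕ}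

theorem length_le (h : OccursAt X W p) : X.length ≤ W.length - p := by
  have := congrArg List.length h
  simp only [List.length_take, List.length_drop] at this
  omega

theorem take (h : OccursAt X W p) (k : ℕ) : OccursAt (X.take k) W p := by
  unfold OccursAt at h ⊢
  conv_rhs => rw [← h]
  rw [List.take_take, List.length_take]

theorem drop (h : OccursAt X W p) (d : ℕ) : OccursAt (X.drop d) W (p + d) := by
  unfold OccursAt at h ⊢
  rw [List.length_drop, ← List.drop_drop, ← List.drop_take, h]

end OccursAt

theorem OccursBefore.take {α : Type*} {X W : List α} {ℓ : ℕ} (h : OccursBefore X W ℓ)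
    (k : ℕ) : OccursBefore (X.take k) W ℓ :=
  let ⟨p, hp, hocc⟩ := h
  ⟨p, hp, hocc.take k⟩

theorem length_metaWord {α : Type*} (r : ℕ) (W : List α) :
    (metaWord r W).length = W.length / r := by
  simp [metaWord]

theorem flatten_take_drop_metaWord {α : Type*} {r : ℕ} {W : List α} {a m : ℕ}
    (h : m ≤ W.length / r - a) :
    (((metaWord r W).drop a).take m).flatten = (W.drop (a * r)).take (m * r) := by
  induction m generalizing a with
  | zero => simp
  | succ m ih =>
    have ha : a < (metaWord r W).length := by rw [length_metaWord]; omega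
    rw [List.drop_eq_getElem_cons ha, List.take_succ_cons, List.flatten_cons,
      ih (by omega), Nat.succ_mul m, Nat.add_comm (m * r), List.take_add, List.drop_drop,
      ← Nat.succ_mul]
    simp [metaWord]

theorem OccursAt.flatten_metaWord {α : Type*} {r : ℕ} {W : List α} {a b m : ℕ}
    (h : OccursAt (((metaWord r W).drop b).take m) (metaWord r W) a)
    (hb : b + m ≤ W.length / r) :
    OccursAt ((W.drop (b * r)).take (m * r)) W (a * r) := by
  have hlen : (((metaWord r W).drop b).take m).length = m := by
    simp only [List.length_take, List.length_drop, length_metaWord]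
    omega
  have ha : m ≤ W.length / r - a := by
    simpa [hlen, length_metaWord] using h.length_le
  have hblocks := congrArg List.flatten h
  rw [hlen, flatten_take_drop_metaWord ha, flatten_take_drop_metaWord (by omega)] at hblocks
  have hWlen : (b + m) * r ≤ W.length :=
    (Nat.mul_le_mul_right r hb).trans (Nat.div_mul_le_self _ _)
  unfold OccursAt
  rw [List.length_take, List.length_drop, Nat.min_eq_left (by rw [Nat.add_mul] at hWlen; omega),
    hblocks]

namespace IsLZFact

variable {α : Type*} {W : List α} {fs : List (List α)}

theorem drop_length_flatten_take (h : IsLZFact W fs) (i : Fin fs.length) :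
    W.drop ((fs.take i).flatten).length = fs.get i ++ (fs.drop (i + 1)).flatten := by
  have hsplit : W = (fs.take i).flatten ++ (fs.get i ++ (fs.drop (i + 1)).flatten) := by
    conv_lhs => rw [← h.1, ← List.take_append_drop i fs]
    rw [List.flatten_append, List.drop_eq_getElem_cons i.isLt, List.flatten_cons,
      List.get_eq_getElem]
  conv_lhs => rw [hsplit]
  exact List.drop_left

theorem le_length_get (h : IsLZFact W fs) (i : Fin fs.length) {K : ℕ}
    (hK : K ≤ W.length - ((fs.take i).flatten).length)
    (hocc : OccursBefore ((W.drop ((fs.take i).flatten).length).take K) W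
      ((fs.take i).flatten).length) :
    K ≤ (fs.get i).length := by
  rcases h.2.2 i with ⟨hlen, hnew⟩ | ⟨-, hmax⟩
  · by_contra! hlt
    apply hnew
    have hfirst := hocc.take 1
    rwa [List.take_take, Nat.min_eq_left (by omega), ← hlen,
      h.drop_length_flatten_take, List.take_left] at hfirst
  · exact hmax K hK hocc

end IsLZFact

/-- If `W'[ℓ'+1..s-1]` occurs in the meta-word `W'` starting at a (1-based)
    position `≤ ℓ'` (0-based position `q < ℓ'`), where `ℓ' = ⌊ℓ/r⌋` and `ℓ` is
    the total length of the LZ factors `f_1,…,f_{i-1}`, then `W[ℓ+1..(s-1)r]`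
    occurs in `W` starting at a position `≤ ℓ`, and hence
    `|f_i| ≥ (s-1)r - ℓ`. -/
theorem lz_meta_occurrence {α : Type*} (W : List α) (fs : List (List α))
    (h : IsLZFact W fs) (i : Fin fs.length) (r ℓ ℓ' s q : ℕ)
    (hℓ : ℓ = ((fs.take i).flatten).length) (hℓ' : ℓ' = ℓ / r)
    (hr : 1 ≤ r) (hs : ℓ' + 2 ≤ s) (hsW : (s - 1) * r ≤ W.length)
    (hq : q < ℓ')
    (hocc : OccursAt (((metaWord r W).drop ℓ').take (s - 1 - ℓ'))
      (metaWord r W) q) :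
    OccursBefore ((W.drop ℓ).take ((s - 1) * r - ℓ)) W ℓ ∧
      (s - 1) * r - ℓ ≤ (fs.get i).length := by
  set d := ℓ % r
  have hℓ_eq : ℓ' * r + d = ℓ := by rw [hℓ', Nat.mul_comm]; exact Nat.div_add_mod ℓ r
  have hqr : q * r + r ≤ ℓ' * r := by simpa [Nat.succ_mul] using Nat.mul_le_mul_right r hq
  have hsr : (s - 1) * r = ℓ' * r + (s - 1 - ℓ') * r := by rw [← Nat.add_mul]; congr 1; omega
  have hfit : ℓ' + (s - 1 - ℓ') ≤ W.length / r := by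
    rw [Nat.add_sub_cancel' (by omega)]
    exact (Nat.le_div_iff_mul_le (by omega)).mpr hsW
  have hblocks := hocc.flatten_metaWord hfit
  have hshift := hblocks.drop d
  rw [List.drop_take, List.drop_drop, hℓ_eq,
    show (s - 1 - ℓ') * r - d = (s - 1) * r - ℓ by omega] at hshift
  have hbefore : OccursBefore ((W.drop ℓ).take ((s - 1) * r - ℓ)) W ℓ :=
    ⟨q * r + d, by omega, hshift⟩
  subst hℓ
  exact ⟨hbefore, h.le_length_get i (by omega) hbefore⟩
end
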